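/- For every integer k ≥ 1 there exists a 2-player cake-cutting instance in class X(k) such that some k-piece allocation (each player receiving exactly the k pieces he owns) has utilitarian welfare 2, while every contiguous allocation has utilitarian welfare at most 2k/(2k−1). Consequently the ratio of optimal k-piece utilitarian welfare to optimal contiguous utilitarian welfare for this instance equals 2 − 1/k. -/

import Mathlib

open MeasureTheory Set

/-- An `n`-player cake-cutting instance: continuous nonnegative density functions
on `[0,1]`, each of total integral `1`. -/
structure CakeInstance (n : ℕ) where
  d : Fin n → ℝ → ℝ
  cont : ∀ i, ContinuousOn (d i) (Set.Icc 0 1)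
  nonneg : ∀ i, ∀ x ∈ Set.Icc (0:ℝ) 1, 0 ≤ d i x
  total : ∀ i, ∫ x in (0:ℝ)..1, d i x = 1

namespace CakeInstance

/-- Value of player `i` for the interval `[a,b]`. -/
noncomputable def ival {n : ℕ} (C : CakeInstance n) (i : Fin n) (a b : ℝ) : ℝ :=
  ∫ x in a..b, C.d i x

/-- Value of player `i` for a set `S`. -/
noncomputable def sval {n : ℕ} (C : CakeInstance n) (i : Fin n) (S : Set ℝ) : ℝ :=
  ∫ x in S, C.d i x

end CakeInstance

/-- A contiguous allocation: weakly increasing cut points `x 0 = 0 ≤ … ≤ x n = 1`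
together with a permutation `σ` assigning the `j`-th interval `[x j, x (j+1)]`
to player `σ j`. -/
structure ContigAlloc (n : ℕ) where
  x : Fin (n+1) → ℝ
  mono : Monotone x
  first : x 0 = 0
  last : x (Fin.last n) = 1
  σ : Equiv.Perm (Fin n)

/-- The (closed) interval received by player `i` in a contiguous allocation. -/
def cpiece {n : ℕ} (A : ContigAlloc n) (i : Fin n) : Set ℝ :=
  Set.Icc (A.x (A.σ.symm i).castSucc) (A.x (A.σ.symm i).succ)

/-- Value of player `i` for the interval received by player `j`. -/
noncomputable def cval {n : ℕ} (C : CakeInstance n) (A : ContigAlloc n) (i j : Fin n) : ℝ :=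
  C.ival i (A.x (A.σ.symm j).castSucc) (A.x (A.σ.symm j).succ)

/-- Utilitarian welfare of a contiguous allocation. -/
noncomputable def cWelfare {n : ℕ} (C : CakeInstance n) (A : ContigAlloc n) : ℝ :=
  ∑ i, cval C A i i

/-- Egalitarian welfare of a contiguous allocation. -/
noncomputable def cEgal {n : ℕ} (C : CakeInstance n) (A : ContigAlloc n) : ℝ :=
  ⨅ i, cval C A i i

/-- A contiguous allocation is envy-free if nobody prefers another player's interval. -/
def cEnvyFree {n : ℕ} (C : CakeInstance n) (A : ContigAlloc n) : Prop :=
  ∀ i j, cval C A i j ≤ cval C A i i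

/-- A `k`-piece allocation: each player `i` receives the union of (at most) `k`
closed intervals `[lo i m, hi i m] ⊆ [0,1]` (possibly degenerate); all these
intervals are pairwise non-overlapping and together they cover `[0,1]`. -/
structure KPieceAlloc (n k : ℕ) where
  lo : Fin n → Fin k → ℝ
  hi : Fin n → Fin k → ℝ
  le : ∀ i m, lo i m ≤ hi i m
  sub : ∀ i m, Set.Icc (lo i m) (hi i m) ⊆ Set.Icc (0:ℝ) 1
  nonoverlap : ∀ i m i' m', (i, m) ≠ (i', m') →
      Set.Ioo (lo i m) (hi i m) ∩ Set.Ioo (lo i' m') (hi i' m') = ∅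
  cover : (⋃ i, ⋃ m, Set.Icc (lo i m) (hi i m)) = Set.Icc (0:ℝ) 1

/-- Value of player `i` for the portion received by player `j` in a `k`-piece allocation. -/
noncomputable def kval {n k : ℕ} (C : CakeInstance n) (A : KPieceAlloc n k) (i j : Fin n) : ℝ :=
  ∑ m, C.ival i (A.lo j m) (A.hi j m)

/-- Utilitarian welfare of a `k`-piece allocation. -/
noncomputable def kWelfare {n k : ℕ} (C : CakeInstance n) (A : KPieceAlloc n k) : ℝ :=
  ∑ i, kval C A i i

/-- Egalitarian welfare of a `k`-piece allocation. -/
noncomputable def kEgal {n k : ℕ} (C : CakeInstance n) (A : KPieceAlloc n k) : ℝ :=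
  ⨅ i, kval C A i i

/-- A `k`-piece allocation is envy-free if nobody prefers another player's portion. -/
def kEnvyFree {n k : ℕ} (C : CakeInstance n) (A : KPieceAlloc n k) : Prop :=
  ∀ i j, kval C A i j ≤ kval C A i i

/-- A witness that an `n`-player cake-cutting instance lies in the class `X(k)`:
cut points `0 = c 0 < c 1 < … < c (n*k) = 1` and an ownership map under which each
player owns exactly `k` of the pieces `[c j, c (j+1)]` and values the unowned pieces `0`. -/
structure XkWitness {n : ℕ} (C : CakeInstance n) (k : ℕ) where
  c : Fin (n*k+1) → ℝ
  mono : StrictMono c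
  first : c 0 = 0
  last : c (Fin.last (n*k)) = 1
  owner : Fin (n*k) → Fin n
  ownCount : ∀ i : Fin n, (Finset.univ.filter fun j => owner j = i).card = k
  zeroVal : ∀ (i : Fin n) (j : Fin (n*k)), owner j ≠ i →
      C.ival i (c j.castSucc) (c j.succ) = 0

/-- The `j`-th owned piece, as a set. -/
def XkWitness.pieceSet {n k : ℕ} {C : CakeInstance n} (W : XkWitness C k)
    (j : Fin (n*k)) : Set ℝ :=
  Set.Icc (W.c j.castSucc) (W.c j.succ)

/-- Value of player `i` for the `j`-th owned piece. -/
noncomputable def XkWitness.pieceVal {n k : ℕ} {C : CakeInstance n} (W : XkWitness C k)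
    (i : Fin n) (j : Fin (n*k)) : ℝ :=
  C.ival i (W.c j.castSucc) (W.c j.succ)

/-- A `k`-piece allocation gives each player exactly the pieces he owns:
every owned piece occurs among its owner's allocated intervals. -/
def XkWitness.givesOwnedPieces {n k : ℕ} {C : CakeInstance n} (W : XkWitness C k)
    (A : KPieceAlloc n k) : Prop :=
  ∀ j : Fin (n*k), ∃ m : Fin k,
    A.lo (W.owner j) m = W.c j.castSucc ∧ A.hi (W.owner j) m = W.c j.succ

/-!
Write `n = 2k - 1`. Player `0` gets the positive part and player `1` the negative part of
`π cos (nπx)`. Since `∫₀¹ |π cos (nπx)| = 2` (periodicity of `|cos|`) and `∫₀¹ π cos (nπx) = 0`,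
both are probability densities, and they alternate in ownership of the `2k` intervals into which
the zeros `(2j - 1)/(2n)` of the cosine cut `[0, 1]`. Giving each player his own intervals yields
welfare `2`, whereas a contiguous allocation cut at `t` has welfare
`1 ± (V₀[0,t] - V₁[0,t]) = 1 ± sin (nπt)/n ≤ 1 + 1/n = 2k/(2k-1)`, with equality at `t = 1/(2n)`.
-/

open Real intervalIntegral

namespace CakeInstance

lemma intervalIntegrable {n : ℕ} (C : CakeInstance n) (i : Fin n) {a b : ℝ}
    (ha : a ∈ Icc (0 : ℝ) 1) (hb : b ∈ Icc (0 : ℝ) 1) :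
    IntervalIntegrable (C.d i) volume a b :=
  ((C.cont i).mono (uIcc_subset_Icc ha hb)).intervalIntegrable

lemma ival_zero_add_ival_one {n : ℕ} (C : CakeInstance n) (i : Fin n) {t : ℝ}
    (ht : t ∈ Icc (0 : ℝ) 1) : C.ival i 0 t + C.ival i t 1 = 1 := by
  have h0 : (0 : ℝ) ∈ Icc (0 : ℝ) 1 := ⟨le_rfl, zero_le_one⟩
  have h1 : (1 : ℝ) ∈ Icc (0 : ℝ) 1 := ⟨zero_le_one, le_rfl⟩
  rw [ival, ival, integral_add_adjacent_intervals (C.intervalIntegrable i h0 ht)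
    (C.intervalIntegrable i ht h1), C.total]

end CakeInstance

lemma ContigAlloc.x_one_mem_Icc (B : ContigAlloc 2) : B.x 1 ∈ Icc (0 : ℝ) 1 :=
  ⟨B.first ▸ B.mono (Fin.zero_le _), B.last ▸ B.mono (Fin.le_last _)⟩

def ContigAlloc.ofCut (t : ℝ) (ht : t ∈ Icc (0 : ℝ) 1) : ContigAlloc 2 where
  x := ![0, t, 1]
  mono := by
    rw [Fin.monotone_iff_le_succ]
    intro j
    fin_cases j
    exacts [ht.1, ht.2]
  first := rfl
  last := rfl
  σ := 1

section TwoPlayers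

variable (C : CakeInstance 2) (B : ContigAlloc 2)

lemma cWelfare_two_of_sigma_eq_one (h : B.σ = 1) :
    cWelfare C B = 1 + (C.ival 0 0 (B.x 1) - C.ival 1 0 (B.x 1)) := by
  have := C.ival_zero_add_ival_one 1 B.x_one_mem_Icc
  have hx2 : B.x 2 = 1 := B.last
  simp only [cWelfare, cval, Fin.sum_univ_two, h, Equiv.Perm.one_def, Equiv.refl_symm,
    Equiv.refl_apply, Fin.castSucc_zero, Fin.succ_zero_eq_one, Fin.castSucc_one,
    Fin.succ_one_eq_two, B.first, hx2]
  linarith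

lemma cWelfare_two_le : cWelfare C B ≤ 1 + |C.ival 0 0 (B.x 1) - C.ival 1 0 (B.x 1)| := by
  rcases (by decide : ∀ σ : Equiv.Perm (Fin 2), σ = 1 ∨ σ = Equiv.swap 0 1) B.σ with h | h
  · rw [cWelfare_two_of_sigma_eq_one C B h]
    linarith [le_abs_self (C.ival 0 0 (B.x 1) - C.ival 1 0 (B.x 1))]
  · have := C.ival_zero_add_ival_one 0 B.x_one_mem_Icc
    have hx2 : B.x 2 = 1 := B.last
    simp only [cWelfare, cval, Fin.sum_univ_two, h, Equiv.symm_swap, Equiv.swap_apply_left,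
      Equiv.swap_apply_right, Fin.castSucc_zero, Fin.succ_zero_eq_one, Fin.castSucc_one,
      Fin.succ_one_eq_two, B.first, hx2]
    linarith [neg_abs_le (C.ival 0 0 (B.x 1) - C.ival 1 0 (B.x 1))]

end TwoPlayers

lemma exists_mem_Icc_succ {α : Type*} [LinearOrder α] (c : ℕ → α)
    {x : α} (N : ℕ) (hx : x ∈ Icc (c 0) (c (N + 1))) : ∃ j ≤ N, x ∈ Icc (c j) (c (j + 1)) := by
  induction N with
  | zero => exact ⟨0, le_rfl, hx⟩
  | succ N ih =>
    rcases le_total x (c (N + 1)) with h | h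
    · obtain ⟨j, hj, hxj⟩ := ih ⟨hx.1, h⟩
      exact ⟨j, by omega, hxj⟩
    · exact ⟨N + 1, le_rfl, h, hx.2⟩

lemma sum_filter_mod_two {M : Type*} [AddCommMonoid M] (k : ℕ) (i : Fin 2) (g : ℕ → M) :
    ∑ j ∈ Finset.univ.filter (fun j : Fin (2 * k) => (j : ℕ) % 2 = i), g j =
      ∑ m : Fin k, g (2 * m + i) := by
  have mem (j : Fin (2 * k)) :
      j ∈ Finset.univ.filter (fun j : Fin (2 * k) => (j : ℕ) % 2 = i) ↔ (j : ℕ) % 2 = i := by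
    simp
  refine Finset.sum_bij' (fun j _ => ⟨j / 2, by omega⟩) (fun m _ => ⟨2 * m + i, by omega⟩)
    (fun _ _ => Finset.mem_univ _) (fun m _ => (mem _).2 ?_) (fun j hj => ?_) (fun m _ => ?_)
    (fun j hj => ?_)
  · simp only; omega
  · rw [mem] at hj; simp only [Fin.ext_iff]; omega
  · simp only [Fin.ext_iff]; omega
  · rw [mem] at hj; congr 1; simp only; omega

section Alternating

variable {k : ℕ} {c : ℕ → ℝ}

def alternatingAlloc (hc : Monotone c) (h0 : c 0 = 0) (h1 : c (2 * k) = 1) :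
    KPieceAlloc 2 k where
  lo i m := c (2 * m + i)
  hi i m := c (2 * m + i + 1)
  le _ _ := hc (Nat.le_succ _)
  sub _ _ := Icc_subset_Icc (h0 ▸ hc (Nat.zero_le _)) (h1 ▸ hc (by omega))
  nonoverlap i m i' m' hne := by
    have hidx : 2 * (m : ℕ) + i ≠ 2 * m' + i' := fun h =>
      hne (by simp only [Prod.mk.injEq, Fin.ext_iff]; omega)
    exact (hc.pairwise_disjoint_on_Ioo_succ hidx).inter_eq
  cover := by
    refine (iUnion₂_subset fun i m => Icc_subset_Icc
      (h0 ▸ hc (Nat.zero_le _)) (h1 ▸ hc (by omega))).antisymm fun x hx => ?_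
    obtain ⟨N, hN⟩ : ∃ N, 2 * k = N + 1 := ⟨2 * k - 1, by
      rcases Nat.eq_zero_or_pos k with rfl | hk
      · exact absurd (h0.symm.trans h1) zero_ne_one
      · omega⟩
    obtain ⟨j, hj, hxj⟩ := exists_mem_Icc_succ c N (by rwa [h0, ← hN, h1])
    refine mem_iUnion₂.2 ⟨⟨j % 2, by omega⟩, ⟨j / 2, by omega⟩, ?_⟩
    simpa only [Nat.div_add_mod] using hxj

lemma kval_alternatingAlloc (C : CakeInstance 2) (hc : Monotone c) (h0 : c 0 = 0)
    (h1 : c (2 * k) = 1)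
    (hzero : ∀ (i : Fin 2) (j : ℕ), j < 2 * k → j % 2 ≠ i → C.ival i (c j) (c (j + 1)) = 0)
    (i : Fin 2) : kval C (alternatingAlloc hc h0 h1) i i = 1 := by
  have hmem : ∀ j ≤ 2 * k, c j ∈ Icc (0 : ℝ) 1 := fun j hj =>
    ⟨h0 ▸ hc (Nat.zero_le _), h1 ▸ hc hj⟩
  calc kval C (alternatingAlloc hc h0 h1) i i
      = ∑ j ∈ Finset.univ.filter (fun j : Fin (2 * k) => (j : ℕ) % 2 = i),
          C.ival i (c j) (c (j + 1)) :=
        (sum_filter_mod_two k i fun j => C.ival i (c j) (c (j + 1))).symm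
    _ = ∑ j : Fin (2 * k), C.ival i (c j) (c (j + 1)) :=
        Finset.sum_filter_of_ne fun j _ h => by_contra fun hj => h (hzero i j j.isLt hj)
    _ = ∑ j ∈ Finset.range (2 * k), C.ival i (c j) (c (j + 1)) :=
        Fin.sum_univ_eq_sum_range (fun j => C.ival i (c j) (c (j + 1))) _
    _ = C.ival i (c 0) (c (2 * k)) :=
        sum_integral_adjacent_intervals fun j hj =>
          C.intervalIntegrable i (hmem j hj.le) (hmem (j + 1) hj)
    _ = 1 := by rw [h0, h1]; exact C.total i

end Alternating

noncomputable def wave (n : ℕ) (x : ℝ) : ℝ := π * cos (n * π * x)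

lemma continuous_wave (n : ℕ) : Continuous (wave n) := by
  unfold wave; fun_prop

lemma integral_wave {n : ℕ} (hn : n ≠ 0) (t : ℝ) :
    ∫ x in 0..t, wave n x = sin (n * π * t) / n := by
  have : (n * π : ℝ) ≠ 0 := by positivity
  simp only [wave]
  rw [intervalIntegral.integral_const_mul, integral_comp_mul_left (fun x => cos x) this,
    integral_cos, mul_zero, sin_zero, sub_zero, smul_eq_mul]
  field_simp

lemma integral_abs_cos_zero_nat_mul_pi (n : ℕ) : ∫ x in 0..n * π, |cos x| = 2 * n := by
  have hper : Function.Periodic (fun x => |cos x|) π := fun x => by simp [cos_add_pi]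
  have hint : ∀ a b : ℝ, IntervalIntegrable (fun x => |cos x|) volume a b :=
    fun a b => (continuous_cos.abs).intervalIntegrable a b
  have h := hper.intervalIntegral_add_zsmul_eq n 0 hint
  have hhalf : ∫ x in 0..0 + π, |cos x| = 2 := by
    rw [hper.intervalIntegral_add_eq 0 (-(π / 2)),
      integral_congr (g := cos) fun x hx => abs_of_nonneg (cos_nonneg_of_mem_Icc ?_)]
    · rw [integral_cos, neg_add_eq_sub, sin_pi_sub, sin_neg, sin_pi_div_two]
      norm_num
    · rw [uIcc_of_le (by linarith [pi_pos])] at hx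
      exact ⟨hx.1, by linarith [hx.2]⟩
  simp only [zero_add, zsmul_eq_mul, Int.cast_natCast] at h hhalf
  rw [h, hhalf, mul_comm]

lemma integral_abs_wave {n : ℕ} (hn : n ≠ 0) : ∫ x in 0..1, |wave n x| = 2 := by
  have : (n * π : ℝ) ≠ 0 := by positivity
  simp only [wave, abs_mul, abs_of_pos pi_pos]
  rw [intervalIntegral.integral_const_mul, integral_comp_mul_left (fun x => |cos x|) this,
    mul_zero, mul_one, integral_abs_cos_zero_nat_mul_pi, smul_eq_mul]
  field_simp

lemma neg_one_pow_mul_wave_nonneg {n j : ℕ} (hn : n ≠ 0) {x : ℝ}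
    (hx : x ∈ Icc ((2 * j - 1 : ℝ) / (2 * n)) ((2 * j + 1) / (2 * n))) :
    0 ≤ (-1) ^ j * wave n x := by
  have hn' : (0 : ℝ) < n := by positivity
  rw [wave, mul_left_comm, ← cos_sub_nat_mul_pi]
  refine mul_nonneg pi_pos.le (cos_nonneg_of_mem_Icc ⟨?_, ?_⟩)
  · have := hx.1
    rw [div_le_iff₀ (by positivity)] at this
    nlinarith [pi_pos]
  · have := hx.2
    rw [le_div_iff₀ (by positivity)] at this
    nlinarith [pi_pos]

lemma posPart_neg_one_pow_mul (i : ℕ) (a : ℝ) :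
    ((-1) ^ i * a)⁺ = (|a| + (-1) ^ i * a) / 2 := by
  have h₁ := posPart_add_negPart ((-1) ^ i * a)
  have h₂ := posPart_sub_negPart ((-1) ^ i * a)
  rw [abs_mul, abs_pow, abs_neg, abs_one, one_pow, one_mul] at h₁
  linarith

noncomputable def waveDensity (n i : ℕ) (x : ℝ) : ℝ := ((-1) ^ i * wave n x)⁺

lemma waveDensity_eq (n i : ℕ) :
    waveDensity n i = fun x => (|wave n x| + (-1) ^ i * wave n x) / 2 :=
  funext fun x => posPart_neg_one_pow_mul i (wave n x)

lemma continuous_waveDensity (n i : ℕ) : Continuous (waveDensity n i) := by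
  rw [waveDensity_eq]
  have := continuous_wave n
  fun_prop

lemma integral_waveDensity {n : ℕ} (hn : n ≠ 0) (i : ℕ) (t : ℝ) :
    ∫ x in 0..t, waveDensity n i x =
      ((∫ x in 0..t, |wave n x|) + (-1) ^ i * (sin (n * π * t) / n)) / 2 := by
  have hw := (continuous_wave n).intervalIntegrable (μ := volume) 0 t
  rw [waveDensity_eq, intervalIntegral.integral_div, integral_add hw.abs (hw.const_mul _),
    intervalIntegral.integral_const_mul, integral_wave hn]

lemma integral_waveDensity_zero_one {n : ℕ} (hn : n ≠ 0) (i : ℕ) :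
    ∫ x in 0..1, waveDensity n i x = 1 := by
  rw [integral_waveDensity hn, integral_abs_wave hn, mul_one, sin_nat_mul_pi]
  norm_num

lemma integral_waveDensity_sub {n : ℕ} (hn : n ≠ 0) (t : ℝ) :
    (∫ x in 0..t, waveDensity n 0 x) - ∫ x in 0..t, waveDensity n 1 x = sin (n * π * t) / n := by
  rw [integral_waveDensity hn, integral_waveDensity hn]
  ring

lemma waveDensity_eq_zero {n i j : ℕ} (hn : n ≠ 0) (hij : i % 2 ≠ j % 2) {x : ℝ}
    (hx : x ∈ Icc ((2 * j - 1 : ℝ) / (2 * n)) ((2 * j + 1) / (2 * n))) :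
    waveDensity n i x = 0 := by
  have hsign : (-1 : ℝ) ^ i = -(-1) ^ j := by
    have hi : i % 2 = (j + 1) % 2 := by omega
    rw [neg_one_pow_eq_pow_mod_two, hi, ← neg_one_pow_eq_pow_mod_two, pow_succ, mul_neg_one]
  rw [waveDensity, posPart_eq_zero, hsign, neg_mul, neg_nonpos]
  exact neg_one_pow_mul_wave_nonneg hn hx

noncomputable def waveInstance (n : ℕ) (hn : n ≠ 0) : CakeInstance 2 where
  d i := waveDensity n i
  cont i := (continuous_waveDensity n i).continuousOn
  nonneg _ _ _ := posPart_nonneg _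
  total i := integral_waveDensity_zero_one hn i

/-- The zeros `(2j - 1)/(2n)` of `wave n`, clamped to `[0, 1]` so that `j = 0` and `j = n + 1`
give the endpoints of the cake. -/
noncomputable def waveCut (n j : ℕ) : ℝ := max 0 (min 1 ((2 * j - 1) / (2 * n)))

lemma waveCut_zero (n : ℕ) : waveCut n 0 = 0 := by
  refine max_eq_left (min_le_of_right_le ?_)
  rw [Nat.cast_zero, mul_zero, zero_sub]
  exact div_nonpos_of_nonpos_of_nonneg (by norm_num) (by positivity)

lemma waveCut_succ_self {n : ℕ} (hn : n ≠ 0) : waveCut n (n + 1) = 1 := by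
  have hn' : (0 : ℝ) < n := by positivity
  rw [waveCut, min_eq_left, max_eq_right zero_le_one]
  rw [le_div_iff₀ (by positivity)]
  push_cast
  linarith

lemma waveCut_mono (n : ℕ) : Monotone (waveCut n) := fun j j' h =>
  max_le_max le_rfl (min_le_min le_rfl
    (div_le_div_of_nonneg_right (by gcongr) (by positivity)))

lemma waveCut_lt {n j j' : ℕ} (hn : n ≠ 0) (h : j < j') (h' : j' ≤ n + 1) :
    waveCut n j < waveCut n j' := by
  have hn' : (0 : ℝ) < n := by positivity
  have hj : (2 * j - 1 : ℝ) / (2 * n) < 1 := by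
    rw [div_lt_one (by positivity)]
    have : (j : ℝ) + 1 ≤ n + 1 := by exact_mod_cast h.trans_le h'
    linarith
  have hj' : 0 < (2 * j' - 1 : ℝ) / (2 * n) := by
    have : (1 : ℝ) ≤ j' := by exact_mod_cast (Nat.zero_le j).trans_lt h
    apply div_pos <;> linarith
  have hjj' : (2 * j - 1 : ℝ) / (2 * n) < (2 * j' - 1) / (2 * n) := by
    gcongr
  rw [waveCut, min_eq_right hj.le]
  exact (max_lt (lt_min one_pos hj') (lt_min hj hjj')).trans_le (le_max_right _ _)

lemma Icc_waveCut_subset {n j : ℕ} (hj : j ≤ n) :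
    Icc (waveCut n j) (waveCut n (j + 1)) ⊆
      Icc ((2 * j - 1 : ℝ) / (2 * n)) ((2 * j + 1) / (2 * n)) := by
  have hcast : (2 * ((j + 1 : ℕ) : ℝ) - 1) = 2 * j + 1 := by push_cast; ring
  refine Icc_subset_Icc (le_max_of_le_right (le_min ?_ le_rfl)) ?_
  · have : (j : ℝ) ≤ n := by exact_mod_cast hj
    exact div_le_one_of_le₀ (by linarith) (by positivity)
  · rw [waveCut, hcast]
    exact max_le (by positivity) (min_le_right _ _)

lemma integral_waveDensity_waveCut {n i j : ℕ} (hn : n ≠ 0) (hj : j ≤ n)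
    (hij : i % 2 ≠ j % 2) :
    ∫ x in waveCut n j..waveCut n (j + 1), waveDensity n i x = 0 := by
  refine (integral_congr fun x hx => ?_).trans integral_zero
  rw [uIcc_of_le (waveCut_mono n j.le_succ)] at hx
  exact waveDensity_eq_zero hn hij (Icc_waveCut_subset hj hx)

lemma waveCut_two_mul {k : ℕ} (hk : 1 ≤ k) : waveCut (2 * k - 1) (2 * k) = 1 := by
  simpa [Nat.sub_add_cancel (by omega : 1 ≤ 2 * k)] using
    waveCut_succ_self (n := 2 * k - 1) (by omega)

noncomputable def waveWitness (k : ℕ) (hk : 1 ≤ k) :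
    XkWitness (waveInstance (2 * k - 1) (by omega)) k where
  c j := waveCut (2 * k - 1) j
  mono a b h := waveCut_lt (by omega) h (by have := b.isLt; omega)
  first := waveCut_zero _
  last := waveCut_two_mul hk
  owner j := ⟨j % 2, by omega⟩
  ownCount i := by
    rw [Finset.card_eq_sum_ones]
    simp only [Fin.ext_iff]
    exact (sum_filter_mod_two k i fun _ => 1).trans (by simp)
  zeroVal i j h := integral_waveDensity_waveCut (i := i) (j := j) (by omega)
    (by have := j.isLt; omega) fun h' => h (Fin.ext (by have := i.isLt; simp only; omega))

noncomputable def waveAlloc (k : ℕ) (hk : 1 ≤ k) : KPieceAlloc 2 k :=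
  alternatingAlloc (waveCut_mono _) (waveCut_zero _) (waveCut_two_mul hk)

lemma waveWitness_givesOwnedPieces (k : ℕ) (hk : 1 ≤ k) :
    (waveWitness k hk).givesOwnedPieces (waveAlloc k hk) := fun j =>
  ⟨⟨j / 2, by omega⟩, by simp [waveAlloc, alternatingAlloc, waveWitness, Nat.div_add_mod]⟩

lemma kWelfare_waveAlloc (k : ℕ) (hk : 1 ≤ k) :
    kWelfare (waveInstance (2 * k - 1) (by omega)) (waveAlloc k hk) = 2 := by
  have hval := kval_alternatingAlloc (waveInstance (2 * k - 1) (by omega)) (waveCut_mono _)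
    (waveCut_zero _) (waveCut_two_mul hk) fun i j hj hij =>
      integral_waveDensity_waveCut (by omega) (by omega) (by have := i.isLt; omega)
  rw [kWelfare, Fin.sum_univ_two, waveAlloc, hval, hval]
  norm_num

lemma ival_waveInstance_sub {n : ℕ} (hn : n ≠ 0) (t : ℝ) :
    (waveInstance n hn).ival 0 0 t - (waveInstance n hn).ival 1 0 t = sin (n * π * t) / n :=
  integral_waveDensity_sub hn t

lemma cWelfare_waveInstance_le {n : ℕ} (hn : n ≠ 0) (B : ContigAlloc 2) :
    cWelfare (waveInstance n hn) B ≤ 1 + 1 / n := by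
  refine (cWelfare_two_le _ B).trans ?_
  rw [ival_waveInstance_sub, abs_div, Nat.abs_cast]
  gcongr
  exact abs_sin_le_one _

lemma one_div_two_mul_mem_Icc {n : ℕ} (hn : n ≠ 0) : 1 / (2 * (n : ℝ)) ∈ Icc (0 : ℝ) 1 := by
  have : (1 : ℝ) ≤ n := Nat.one_le_cast.2 (Nat.pos_of_ne_zero hn)
  exact ⟨by positivity, by rw [div_le_one (by positivity)]; linarith⟩

lemma cWelfare_waveInstance_ofCut {n : ℕ} (hn : n ≠ 0) :
    cWelfare (waveInstance n hn) (ContigAlloc.ofCut _ (one_div_two_mul_mem_Icc hn)) =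
      1 + 1 / n := by
  rw [cWelfare_two_of_sigma_eq_one _ _ rfl]
  have hx : (ContigAlloc.ofCut _ (one_div_two_mul_mem_Icc hn)).x 1 = 1 / (2 * n) := rfl
  rw [ival_waveInstance_sub, hx, show (n : ℝ) * π * (1 / (2 * n)) = π / 2 by field_simp,
    sin_pi_div_two]

/-- For every `k ≥ 1` there is a 2-player instance in `X(k)` in which
the `k`-piece allocation giving each player his own pieces has utilitarian welfare `2`,
every contiguous allocation has utilitarian welfare at most `2k/(2k−1)`, this bound is
attained, and consequently the ratio of the two optima is `2 − 1/k`. -/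
theorem poiu_two_lower_bound (k : ℕ) (hk : 1 ≤ k) :
    ∃ (C : CakeInstance 2) (W : XkWitness C k),
      (∃ A : KPieceAlloc 2 k, W.givesOwnedPieces A ∧ kWelfare C A = 2) ∧
      (∀ B : ContigAlloc 2, cWelfare C B ≤ (2*k : ℝ) / (2*(k:ℝ) - 1)) ∧
      (∃ B : ContigAlloc 2, cWelfare C B = (2*k : ℝ) / (2*(k:ℝ) - 1)) ∧
      (2 : ℝ) / ((2*k : ℝ) / (2*(k:ℝ) - 1)) = 2 - 1/(k:ℝ) := by
  have hn : 2 * k - 1 ≠ 0 := by omega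
  have hpos : (0 : ℝ) < 2 * k - 1 := by
    have : (1 : ℝ) ≤ k := by exact_mod_cast hk
    linarith
  have hcast : ((2 * k - 1 : ℕ) : ℝ) = 2 * k - 1 := by
    rw [Nat.cast_sub (by omega), Nat.cast_mul, Nat.cast_ofNat, Nat.cast_one]
  have hbound : (2 * k : ℝ) / (2 * (k : ℝ) - 1) = 1 + 1 / ((2 * k - 1 : ℕ) : ℝ) := by
    rw [hcast]
    field_simp
    ring
  refine ⟨waveInstance (2 * k - 1) hn, waveWitness k hk,
    ⟨waveAlloc k hk, waveWitness_givesOwnedPieces k hk, kWelfare_waveAlloc k hk⟩,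
    fun B => hbound ▸ cWelfare_waveInstance_le hn B,
    ⟨ContigAlloc.ofCut _ (one_div_two_mul_mem_Icc hn),
      hbound ▸ cWelfare_waveInstance_ofCut hn⟩, ?_⟩
  field_simp
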